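/- arXiv:2507.14511 — 3 statements merged into one kernel-verified Lean document; each statement's English description precedes it below -/
import Mathlib

section
/- Let Ψ : ℝ^{N-1} → ℝ be L-Lipschitz and let E_Ψ = {(x', x_N) : x_N > Ψ(x')}. For x ∈ E_Ψ and λ ≥ 0, writing x_λ = x + λ e_N, one has dist(x_λ, ∂E_Ψ) ≥ dist(x, ∂E_Ψ)·cos γ + λ·cos γ, where γ = arctan L. -/
open Metric Set MeasureTheory Filter

noncomputable section

/-- `Euc n` is Euclidean space `ℝ^n`. -/
abbrev Euc (n : ℕ) := EuclideanSpace ℝ (Fin n)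

/-- A function is harmonic on a set if it is `C²` there and its Laplacian vanishes. -/
def HarmonicOnSet {m : ℕ} (f : Euc m → ℝ) (s : Set (Euc m)) : Prop :=
  ContDiffOn ℝ 2 f s ∧ ∀ x ∈ s,
    ∑ i : Fin m, fderiv ℝ (fun y => fderiv ℝ f y (EuclideanSpace.single i 1)) x
      (EuclideanSpace.single i 1) = 0

/-- The constant `K_N = 2 m_{N-1}(B^{N-1}) / m_N(B^N)` (here `N = n+1`). -/
def Kconst (n : ℕ) : ℝ :=
  2 * (volume (ball (0 : Euc n) 1)).toReal / (volume (ball (0 : Euc (n+1)) 1)).toReal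

/-- the projection of `ℝ^{n+1}` onto the first `n` coordinates -/
def proj {n : ℕ} (x : Euc (n+1)) : Euc n := WithLp.toLp 2 (fun i : Fin n => x i.castSucc)

/-- the last standard basis vector `e_N` in `ℝ^{n+1}` -/
def eN (n : ℕ) : Euc (n+1) := EuclideanSpace.single (Fin.last n) 1

/-- the strict epigraph of `Ψ : ℝ^n → ℝ` -/
def epigraph {n : ℕ} (Ψ : Euc n → ℝ) : Set (Euc (n+1)) :=
  {x | Ψ (proj x) < x (Fin.last n)}

/-- the point obtained from `x` by replacing its last coordinate with `t` -/
def vmove {n : ℕ} (x : Euc (n+1)) (t : ℝ) : Euc (n+1) :=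
  x + (t - x (Fin.last n)) • eN n

/-- the vertical Hölder condition of order `α` with constant `C` -/
def VertHolder {n : ℕ} (Ψ : Euc n → ℝ) (U : Euc (n+1) → ℝ) (C α : ℝ) : Prop :=
  ∀ x ∈ epigraph Ψ, ∀ t : ℝ, Ψ (proj x) < t →
    |U x - U (vmove x t)| ≤ C * |x (Fin.last n) - t| ^ α

/-!
The height `h(x) = x_N - Ψ(x')` of a point above the graph is `√(1+L²)`-Lipschitz
(Cauchy–Schwarz applied to `|x_N - y_N| + L |x' - y'|`) and is `≤ 0` on the boundary of the
epigraph, so `h(x) ≤ √(1+L²) dist(x, ∂E_Ψ)`. Conversely the point of the graph straight below `x`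
shows `dist(x, ∂E_Ψ) ≤ h(x)`. Since `h(x + λ e_N) = h(x) + λ` and `cos γ = 1/√(1+L²)`, this gives
the claim.
-/

namespace Epigraph

variable {n : ℕ}

@[simp]
lemma proj_add_smul_eN (x : Euc (n+1)) (c : ℝ) : proj (x + c • eN n) = proj x := by
  ext i
  simp [proj, eN]

@[simp]
lemma add_smul_eN_last (x : Euc (n+1)) (c : ℝ) :
    (x + c • eN n) (Fin.last n) = x (Fin.last n) + c := by
  simp [eN]

lemma proj_sub (x y : Euc (n+1)) : proj (x - y) = proj x - proj y := by
  ext i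
  simp [proj]

lemma norm_sq_eq_norm_proj_sq_add_sq_last (w : Euc (n+1)) :
    ‖w‖ ^ 2 = ‖proj w‖ ^ 2 + w (Fin.last n) ^ 2 := by
  rw [EuclideanSpace.norm_sq_eq, EuclideanSpace.norm_sq_eq, Fin.sum_univ_castSucc]
  simp [proj]

lemma abs_add_mul_le_sqrt_mul_sqrt (a b L : ℝ) :
    |a| + L * |b| ≤ √(1 + L ^ 2) * √(a ^ 2 + b ^ 2) := by
  rw [← Real.sqrt_mul (by positivity)]
  refine (le_abs_self _).trans (Real.abs_le_sqrt ?_)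
  nlinarith [sq_nonneg (L * |a| - |b|), sq_abs a, sq_abs b]

def height (Ψ : Euc n → ℝ) (x : Euc (n+1)) : ℝ := x (Fin.last n) - Ψ (proj x)

lemma mem_epigraph_iff {Ψ : Euc n → ℝ} {x : Euc (n+1)} : x ∈ epigraph Ψ ↔ 0 < height Ψ x :=
  sub_pos (a := x (Fin.last n)) |>.symm

@[simp]
lemma height_add_smul_eN (Ψ : Euc n → ℝ) (x : Euc (n+1)) (c : ℝ) :
    height Ψ (x + c • eN n) = height Ψ x + c := by
  simp only [height, proj_add_smul_eN, add_smul_eN_last]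
  ring

variable {L : ℝ} {Ψ : Euc n → ℝ}

lemma abs_height_sub_height_le (hΨ : ∀ x y, |Ψ x - Ψ y| ≤ L * ‖x - y‖) (x y : Euc (n+1)) :
    |height Ψ x - height Ψ y| ≤ √(1 + L ^ 2) * dist x y := by
  have hsplit := norm_sq_eq_norm_proj_sq_add_sq_last (x - y)
  rw [proj_sub] at hsplit
  have hdist : dist x y = √(‖proj x - proj y‖ ^ 2 + (x - y) (Fin.last n) ^ 2) := by
    rw [dist_eq_norm, ← hsplit, Real.sqrt_sq (norm_nonneg _)]
  calc |height Ψ x - height Ψ y|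
      ≤ |(x - y) (Fin.last n)| + |Ψ (proj x) - Ψ (proj y)| := by
        rw [PiLp.sub_apply]
        exact (abs_sub _ _).trans_eq' (by unfold height; ring_nf)
    _ ≤ |(x - y) (Fin.last n)| + L * |‖proj x - proj y‖| := by
        rw [abs_norm]
        gcongr
        exact hΨ _ _
    _ ≤ √(1 + L ^ 2) * dist x y := by
        rw [hdist, add_comm (‖_‖ ^ 2)]
        exact abs_add_mul_le_sqrt_mul_sqrt _ _ _

lemma continuous_height (hΨ : ∀ x y, |Ψ x - Ψ y| ≤ L * ‖x - y‖) : Continuous (height Ψ) :=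
  (LipschitzWith.of_dist_le' (abs_height_sub_height_le hΨ)).continuous

lemma isOpen_epigraph (hΨ : ∀ x y, |Ψ x - Ψ y| ≤ L * ‖x - y‖) : IsOpen (epigraph Ψ) := by
  have : epigraph Ψ = height Ψ ⁻¹' Ioi 0 := by
    ext x
    exact mem_epigraph_iff
  exact this ▸ isOpen_Ioi.preimage (continuous_height hΨ)

lemma exists_mem_frontier_dist_le_height {x : Euc (n+1)} (hx : x ∈ epigraph Ψ) :
    ∃ y ∈ frontier (epigraph Ψ), dist x y ≤ height Ψ x := by
  set z := x + (-height Ψ x) • eN n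
  have hz : z ∉ epigraph Ψ := by simp [z, mem_epigraph_iff, -neg_smul]
  obtain ⟨y, hy, hxy⟩ :=
    exists_mem_frontier_infDist_compl_eq_dist hx (ne_univ_iff_exists_notMem _ |>.2 ⟨z, hz⟩)
  refine ⟨y, hy, hxy ▸ (infDist_le_dist_of_mem hz).trans_eq ?_⟩
  rw [dist_self_add_right, norm_smul, eN, PiLp.norm_single, norm_one, mul_one,
    Real.norm_eq_abs, abs_neg, abs_of_pos (mem_epigraph_iff.1 hx)]

lemma height_div_le_infDist_frontier (hΨ : ∀ x y, |Ψ x - Ψ y| ≤ L * ‖x - y‖)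
    (hne : (frontier (epigraph Ψ)).Nonempty) (x : Euc (n+1)) :
    height Ψ x / √(1 + L ^ 2) ≤ infDist x (frontier (epigraph Ψ)) := by
  refine (le_infDist hne).2 fun y hy => ?_
  -- the epigraph is open, so its boundary lies outside it
  have hy0 : height Ψ y ≤ 0 :=
    not_lt.1 fun h => (isOpen_epigraph hΨ).frontier_eq ▸ hy |>.2 (mem_epigraph_iff.2 h)
  rw [div_le_iff₀' (by positivity)]
  linarith [le_abs_self (height Ψ x - height Ψ y), abs_height_sub_height_le hΨ x y]

end Epigraph

open Epigraph in
theorem stmt2_general {n : ℕ} (L : ℝ) (Ψ : Euc n → ℝ)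
    (hΨ : ∀ x y, |Ψ x - Ψ y| ≤ L * ‖x - y‖)
    (x : Euc (n+1)) (hx : x ∈ epigraph Ψ) (lam : ℝ) :
    infDist (x + lam • eN n) (frontier (epigraph Ψ)) ≥
      infDist x (frontier (epigraph Ψ)) * Real.cos (Real.arctan L)
        + lam * Real.cos (Real.arctan L) := by
  obtain ⟨y, hy, hxy⟩ := exists_mem_frontier_dist_le_height hx
  have hx_le : infDist x (frontier (epigraph Ψ)) ≤ height Ψ x :=
    (infDist_le_dist_of_mem hy).trans hxy
  calc infDist x (frontier (epigraph Ψ)) * Real.cos (Real.arctan L) + lam * Real.cos (Real.arctan L)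
      = (infDist x (frontier (epigraph Ψ)) + lam) / √(1 + L ^ 2) := by
        rw [Real.cos_arctan]
        ring
    _ ≤ height Ψ (x + lam • eN n) / √(1 + L ^ 2) := by
        rw [height_add_smul_eN]
        gcongr
    _ ≤ infDist (x + lam • eN n) (frontier (epigraph Ψ)) :=
        height_div_le_infDist_frontier hΨ ⟨y, hy⟩ _

/-- The distance-from-the-boundary lemma for vertical translates in the epigraph of a
Lipschitz function. -/
theorem stmt2 {n : ℕ} (L : ℝ) (hL : 0 ≤ L) (Ψ : Euc n → ℝ)
    (hΨ : ∀ x y, |Ψ x - Ψ y| ≤ L * ‖x - y‖)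
    (x : Euc (n+1)) (hx : x ∈ epigraph Ψ) (lam : ℝ) (hlam : 0 ≤ lam) :
    infDist (x + lam • eN n) (frontier (epigraph Ψ)) ≥
      infDist x (frontier (epigraph Ψ)) * Real.cos (Real.arctan L)
        + lam * Real.cos (Real.arctan L) :=
  stmt2_general L Ψ hΨ x hx lam
end
end

section
/- Let Ψ : ℝ^{N-1} → ℝ be L-Lipschitz with strict epigraph E_Ψ. Then for every x = (x', x_N) ∈ E_Ψ, the vertical distance x_N − Ψ(x') satisfies dist(x, ∂E_Ψ) ≥ (x_N − Ψ(x'))·cos(arctan L) = (x_N − Ψ(x'))/√(1+L²). -/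
open Metric Set MeasureTheory Filter

noncomputable section

/-
A point `y` off the epigraph lies below the graph, so the vertical distance `x_N - Ψ(x')` is at
most `(x_N - y_N) + L‖x' - y'‖`, and by Cauchy–Schwarz in `ℝ²` this is at most `√(1 + L²) · ‖x - y‖`.
The bound is closed in `y`, so it passes to the frontier, which lies in the closure of the
complement; the frontier is nonempty because every vertical line meets both the epigraph and its
complement.
-/

section Epigraph

variable {n : ℕ}

lemma vmove_last (x : Euc (n+1)) (t : ℝ) : vmove x t (Fin.last n) = t := by
  simp [vmove, eN]

lemma proj_vmove (x : Euc (n+1)) (t : ℝ) : proj (vmove x t) = proj x := by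
  ext i
  simp [proj, vmove, eN]

lemma vmove_mem_epigraph_iff (Ψ : Euc n → ℝ) (x : Euc (n+1)) (t : ℝ) :
    vmove x t ∈ epigraph Ψ ↔ Ψ (proj x) < t := by
  simp only [epigraph, mem_ofPred_eq, vmove_last, proj_vmove]

lemma frontier_epigraph_nonempty (Ψ : Euc n → ℝ) : (frontier (epigraph Ψ)).Nonempty := by
  refine nonempty_frontier_iff.2 ⟨⟨vmove 0 (Ψ (proj 0) + 1), ?_⟩, fun h => ?_⟩
  · exact (vmove_mem_epigraph_iff Ψ 0 _).2 (lt_add_one _)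
  · have hmem : vmove 0 (Ψ (proj 0)) ∈ epigraph Ψ := h ▸ mem_univ _
    exact lt_irrefl _ ((vmove_mem_epigraph_iff Ψ 0 _).1 hmem)

lemma dist_eq_sqrt_dist_proj_sq_add_sq (x y : Euc (n+1)) :
    dist x y = √(dist (proj x) (proj y) ^ 2 + (x (Fin.last n) - y (Fin.last n)) ^ 2) := by
  rw [EuclideanSpace.dist_eq, EuclideanSpace.dist_eq, Fin.sum_univ_castSucc,
    Real.sq_sqrt (by positivity), Real.dist_eq, sq_abs]
  rfl

end Epigraph

lemma add_mul_le_sqrt_one_add_sq_mul_sqrt (a b L : ℝ) :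
    a + L * b ≤ √(1 + L ^ 2) * √(a ^ 2 + b ^ 2) := by
  rw [← Real.sqrt_mul (by positivity)]
  refine (le_abs_self _).trans (Real.abs_le_sqrt ?_)
  nlinarith [sq_nonneg (L * a - b)]

section Lipschitz

variable {n : ℕ} {L : ℝ} {Ψ : Euc n → ℝ}

lemma sub_le_sqrt_mul_dist_of_notMem_epigraph (hΨ : ∀ x y, |Ψ x - Ψ y| ≤ L * ‖x - y‖)
    (x : Euc (n+1)) {y : Euc (n+1)}
    (hy : y ∉ epigraph Ψ) :
    x (Fin.last n) - Ψ (proj x) ≤ √(1 + L ^ 2) * dist x y := by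
  have hy_below : y (Fin.last n) ≤ Ψ (proj y) := not_lt.1 hy
  have hΨ_yx : Ψ (proj y) - Ψ (proj x) ≤ L * dist (proj x) (proj y) := by
    rw [dist_comm, dist_eq_norm]
    exact (le_abs_self _).trans (hΨ _ _)
  calc x (Fin.last n) - Ψ (proj x)
      ≤ (x (Fin.last n) - y (Fin.last n)) + L * dist (proj x) (proj y) := by linarith
    _ ≤ √(1 + L ^ 2) * √((x (Fin.last n) - y (Fin.last n)) ^ 2 + dist (proj x) (proj y) ^ 2) :=
        add_mul_le_sqrt_one_add_sq_mul_sqrt _ _ _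
    _ = √(1 + L ^ 2) * dist x y := by
        rw [dist_eq_sqrt_dist_proj_sq_add_sq, add_comm (dist _ _ ^ 2)]

lemma sub_le_sqrt_mul_dist_of_mem_frontier_epigraph
    (hΨ : ∀ x y, |Ψ x - Ψ y| ≤ L * ‖x - y‖) (x : Euc (n+1)) {y : Euc (n+1)}
    (hy : y ∈ frontier (epigraph Ψ)) :
    x (Fin.last n) - Ψ (proj x) ≤ √(1 + L ^ 2) * dist x y := by
  have hclosed : IsClosed {y | x (Fin.last n) - Ψ (proj x) ≤ √(1 + L ^ 2) * dist x y} :=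
    isClosed_le continuous_const (by fun_prop)
  have hcompl : (epigraph Ψ)ᶜ ⊆ {y | x (Fin.last n) - Ψ (proj x) ≤ √(1 + L ^ 2) * dist x y} :=
    fun _ hy => sub_le_sqrt_mul_dist_of_notMem_epigraph hΨ x hy
  rw [← frontier_compl] at hy
  exact closure_minimal hcompl hclosed (frontier_subset_closure hy)

end Lipschitz

theorem stmt3_general {n : ℕ} (L : ℝ) (Ψ : Euc n → ℝ)
    (hΨ : ∀ x y, |Ψ x - Ψ y| ≤ L * ‖x - y‖)
    (x : Euc (n+1)) :
    infDist x (frontier (epigraph Ψ)) ≥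
      (x (Fin.last n) - Ψ (proj x)) * Real.cos (Real.arctan L)
    ∧ Real.cos (Real.arctan L) = 1 / Real.sqrt (1 + L ^ 2) := by
  refine ⟨?_, Real.cos_arctan L⟩
  rw [Real.cos_arctan, ge_iff_le, le_infDist (frontier_epigraph_nonempty Ψ)]
  intro y hy
  rw [mul_one_div, div_le_iff₀' (by positivity)]
  exact sub_le_sqrt_mul_dist_of_mem_frontier_epigraph hΨ x hy

/-- The distance to the boundary of the epigraph is at least the vertical distance times
`cos (arctan L) = 1/√(1+L²)`. -/
theorem stmt3 {n : ℕ} (L : ℝ) (hL : 0 ≤ L) (Ψ : Euc n → ℝ)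
    (hΨ : ∀ x y, |Ψ x - Ψ y| ≤ L * ‖x - y‖)
    (x : Euc (n+1)) (hx : x ∈ epigraph Ψ) :
    infDist x (frontier (epigraph Ψ)) ≥
      (x (Fin.last n) - Ψ (proj x)) * Real.cos (Real.arctan L)
    ∧ Real.cos (Real.arctan L) = 1 / Real.sqrt (1 + L ^ 2) :=
  stmt3_general L Ψ hΨ x
end
end

section
/- Let Ψ : ℝ^{N-1} → ℝ be L-Lipschitz, U a bounded real-valued harmonic function on E_Ψ, and α ∈ (0,1). If U satisfies |U(x', x_N) − U(x', y_N)| ≤ C|x_N − y_N|^α along vertical lines, then U extends continuously to the closed epigraph {(x', x_N) : x_N ≥ Ψ(x')}. -/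
/-!
The vertical translates `x ↦ U (x + h e_N)`, `h > 0`, are continuous on the closed epigraph,
since they only see `U` strictly inside. The vertical Hölder condition makes them uniformly
Cauchy as `h → 0⁺`, with modulus `C |h - k|^α`. Their uniform limit is therefore continuous on
the closed epigraph, and inside the epigraph it is `U` itself by continuity of `U`.
-/

open Metric Set MeasureTheory Filter

noncomputable section

open Topology

section UniformCauchy

variable {ι X β : Type*} {F : ι → X → β} {p : Filter ι} {s : Set X}

theorem uniformCauchySeqOn_of_dist_le [PseudoMetricSpace β] {ω : ι × ι → ℝ}
    (hω : Tendsto ω (p ×ˢ p) (𝓝 0))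
    (hdist : ∀ᶠ ij in p ×ˢ p, ∀ x ∈ s, dist (F ij.1 x) (F ij.2 x) ≤ ω ij) :
    UniformCauchySeqOn F p s := by
  intro u hu
  obtain ⟨ε, hε, hεu⟩ := Metric.mem_uniformity_dist.1 hu
  filter_upwards [hdist, hω.eventually (gt_mem_nhds hε)] with ij hij hωε x hx
  exact hεu ((hij x hx).trans_lt hωε)

theorem UniformCauchySeqOn.exists_continuousOn_tendsto [TopologicalSpace X] [UniformSpace β]
    [CompleteSpace β] [Nonempty β] [p.NeBot] (hF : UniformCauchySeqOn F p s)
    (hcont : ∀ᶠ i in p, ContinuousOn (F i) s) :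
    ∃ V : X → β, ContinuousOn V s ∧ ∀ x ∈ s, Tendsto (F · x) p (𝓝 (V x)) := by
  choose! V hV using fun x (hx : x ∈ s) => cauchy_map_iff_exists_tendsto.1 (hF.cauchy_map hx)
  exact ⟨V, (hF.tendstoUniformlyOn_of_tendsto hV).continuousOn hcont.frequently, hV⟩

end UniformCauchy

theorem tendsto_mul_abs_sub_rpow_nhds_diag (C : ℝ) {α : ℝ} (hα : 0 < α) (t : ℝ) :
    Tendsto (fun hk : ℝ × ℝ => C * |hk.1 - hk.2| ^ α) (𝓝 (t, t)) (𝓝 0) := by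
  have : Continuous fun hk : ℝ × ℝ => C * |hk.1 - hk.2| ^ α :=
    continuous_const.mul ((continuous_fst.sub continuous_snd).abs.rpow_const
      fun _ => Or.inr hα.le)
  simpa [Real.zero_rpow hα.ne'] using this.tendsto (t, t)

section VerticalTranslation

variable {n : ℕ}

@[simp]
theorem proj_add_smul_eN (x : Euc (n+1)) (c : ℝ) : proj (x + c • eN n) = proj x := by
  ext i
  simp [proj, eN]

@[simp]
theorem add_smul_eN_last (x : Euc (n+1)) (c : ℝ) :
    (x + c • eN n) (Fin.last n) = x (Fin.last n) + c := by
  simp [eN]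

theorem vmove_add_smul_eN (x : Euc (n+1)) (h k : ℝ) :
    vmove (x + h • eN n) (x (Fin.last n) + k) = x + k • eN n := by
  rw [vmove, add_smul_eN_last, add_assoc, ← add_smul]
  congr 2
  ring

variable {Ψ : Euc n → ℝ} {x : Euc (n+1)}

theorem add_smul_eN_mem_epigraph (hx : Ψ (proj x) ≤ x (Fin.last n)) {h : ℝ} (hh : 0 < h) :
    x + h • eN n ∈ epigraph Ψ := by
  change Ψ (proj _) < _
  rw [proj_add_smul_eN, add_smul_eN_last]
  linarith

theorem tendsto_add_smul_eN_nhdsWithin_epigraph (hx : Ψ (proj x) ≤ x (Fin.last n)) :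
    Tendsto (fun h : ℝ => x + h • eN n) (𝓝[>] 0) (𝓝[epigraph Ψ] x) := by
  refine tendsto_nhdsWithin_iff.2 ⟨?_, eventually_nhdsWithin_of_forall
    fun h hh => add_smul_eN_mem_epigraph hx hh⟩
  have : Continuous fun h : ℝ => x + h • eN n := by fun_prop
  simpa using this.continuousWithinAt.tendsto (x := 0) (s := Ioi 0)

theorem VertHolder.dist_add_smul_eN_le {U : Euc (n+1) → ℝ} {C α : ℝ}
    (hvert : VertHolder Ψ U C α) (hx : Ψ (proj x) ≤ x (Fin.last n)) {h k : ℝ} (hh : 0 < h) (hk : 0 < k) :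
    dist (U (x + h • eN n)) (U (x + k • eN n)) ≤ C * |h - k| ^ α := by
  have := hvert _ (add_smul_eN_mem_epigraph hx hh) (x (Fin.last n) + k)
    (by rw [proj_add_smul_eN]; linarith)
  rwa [vmove_add_smul_eN, add_smul_eN_last, add_sub_add_left_eq_sub, ← Real.dist_eq] at this

end VerticalTranslation

theorem stmt8_general {n : ℕ} (C α : ℝ) (hα : α ∈ Ioo (0:ℝ) 1)
    (Ψ : Euc n → ℝ)
    (U : Euc (n+1) → ℝ) (hharm : HarmonicOnSet U (epigraph Ψ))
    (hvert : VertHolder Ψ U C α) :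
    ∃ V : Euc (n+1) → ℝ,
      ContinuousOn V {x : Euc (n+1) | Ψ (proj x) ≤ x (Fin.last n)} ∧
      ∀ x ∈ epigraph Ψ, V x = U x := by
  set S : Set (Euc (n+1)) := {x | Ψ (proj x) ≤ x (Fin.last n)}
  have hU : ContinuousOn U (epigraph Ψ) := hharm.1.continuousOn
  have hcont : ∀ᶠ h in 𝓝[>] (0 : ℝ), ContinuousOn (fun x => U (x + h • eN n)) S :=
    eventually_nhdsWithin_of_forall fun h hh =>
      hU.comp (by fun_prop) fun x hx => add_smul_eN_mem_epigraph hx hh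
  have hmodulus : Tendsto (fun hk : ℝ × ℝ => C * |hk.1 - hk.2| ^ α)
      (𝓝[>] 0 ×ˢ 𝓝[>] 0) (𝓝 0) := by
    rw [← nhdsWithin_prod_eq]
    exact (tendsto_mul_abs_sub_rpow_nhds_diag C hα.1 0).mono_left nhdsWithin_le_nhds
  have hdist : ∀ᶠ hk : ℝ × ℝ in 𝓝[>] 0 ×ˢ 𝓝[>] 0, ∀ x ∈ S,
      dist (U (x + hk.1 • eN n)) (U (x + hk.2 • eN n)) ≤ C * |hk.1 - hk.2| ^ α :=
    Filter.mem_of_superset (prod_mem_prod self_mem_nhdsWithin self_mem_nhdsWithin)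
      fun hk hpos x hx => hvert.dist_add_smul_eN_le hx hpos.1 hpos.2
  have hCauchy : UniformCauchySeqOn (fun (h : ℝ) x => U (x + h • eN n)) (𝓝[>] 0) S :=
    uniformCauchySeqOn_of_dist_le hmodulus hdist
  obtain ⟨V, hVcont, hVlim⟩ := hCauchy.exists_continuousOn_tendsto hcont
  refine ⟨V, hVcont, fun x hx => ?_⟩
  have hxS : Ψ (proj x) ≤ x (Fin.last n) := le_of_lt hx
  exact tendsto_nhds_unique (hVlim x hxS)
    ((hU x hx).tendsto.comp (tendsto_add_smul_eN_nhdsWithin_epigraph hxS))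

/-- The vertical Hölder condition implies that `U` extends continuously to the closed
epigraph `{x : Ψ(x') ≤ x_N}`. -/
theorem stmt8 {n : ℕ} (L C α : ℝ) (hL : 0 ≤ L) (hα : α ∈ Ioo (0:ℝ) 1)
    (Ψ : Euc n → ℝ) (hΨ : ∀ x y, |Ψ x - Ψ y| ≤ L * ‖x - y‖)
    (U : Euc (n+1) → ℝ) (hharm : HarmonicOnSet U (epigraph Ψ))
    (hbdd : BddAbove ((fun y => |U y|) '' epigraph Ψ))
    (hvert : VertHolder Ψ U C α) :
    ∃ V : Euc (n+1) → ℝ,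
      ContinuousOn V {x : Euc (n+1) | Ψ (proj x) ≤ x (Fin.last n)} ∧
      ∀ x ∈ epigraph Ψ, V x = U x :=
  stmt8_general C α hα Ψ U hharm hvert
end
end
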